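/- For every x > 0, the polynomial ĥ(x) is the unique highly composite polynomial of its degree: for every monic g ∈ 𝔽_q[t] with deg g ≤ deg ĥ(x) and g ≠ ĥ(x), one has τ(g) < τ(ĥ(x)). -/

import Mathlib

open Polynomial

/-- The number of monic divisors of a polynomial. -/
noncomputable def tau {Fq : Type} [Field Fq] (f : Fq[X]) : ℕ :=
  {d : Fq[X] | d.Monic ∧ d ∣ f}.ncard

/-- The multiplicity of `p` in the factorization of `f`. -/
noncomputable def mult {Fq : Type} [Field Fq] (p f : Fq[X]) : ℕ :=
  multiplicity p f

/-- `h = ĥ(x)`: the monic polynomial whose multiplicity at each monic irreducible `p`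
equals `⌊1/(q^{deg p / x} - 1)⌋`. -/
noncomputable def IsHhat {Fq : Type} [Field Fq] [Fintype Fq] (x : ℝ) (h : Fq[X]) : Prop :=
  h.Monic ∧ ∀ p : Fq[X], p.Monic → Irreducible p →
    mult p h = ⌊1 / ((Fintype.card Fq : ℝ) ^ ((p.natDegree : ℝ) / x) - 1)⌋₊

/-!
Put `Q = q^{1/x}` and `c_p = Q^{deg p}`. If `g = ∏ p^{e_p}`, then
`τ(g) / Q^{deg g} = ∏ (e_p + 1) / c_p^{e_p}`. The ratio of consecutive factors is
`(e + 2) / ((e + 1) c_p)`, which is `≥ 1` exactly when `e + 1 ≤ ⌊1/(c_p - 1)⌋`, so each factor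
is maximal at the exponent `a_p = ⌊1/(c_p - 1)⌋` of `ĥ(x)`, and strictly smaller for `e_p > a_p`.
Hence `τ(g) / Q^{deg g} ≤ τ(ĥ) / Q^{deg ĥ}`, strictly unless `g ∣ ĥ`; since `deg g ≤ deg ĥ`,
either way `τ(g) < τ(ĥ)` as soon as `g ≠ ĥ`.
-/

noncomputable def divisorWeight (c : ℝ) (e : ℕ) : ℝ := (e + 1) / c ^ e

section DivisorWeight

variable {c : ℝ}

theorem divisorWeight_pos (hc : 0 < c) (e : ℕ) : 0 < divisorWeight c e := by
  unfold divisorWeight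
  positivity

theorem divisorWeight_le_divisorWeight_succ_iff (hc : 1 < c) (n : ℕ) :
    divisorWeight c n ≤ divisorWeight c (n + 1) ↔ n + 1 ≤ ⌊1 / (c - 1)⌋₊ := by
  have hc1 : 0 < c - 1 := sub_pos.2 hc
  have hcn : 0 < c ^ n := pow_pos (by linarith) n
  rw [divisorWeight, divisorWeight, div_le_div_iff₀ hcn (by positivity),
    Nat.le_floor_iff (by positivity), le_div_iff₀ hc1, pow_succ]
  push_cast
  constructor <;> intro h <;> nlinarith

theorem divisorWeight_lt_floor_of_floor_lt (hc : 1 < c) {e : ℕ} (he : ⌊1 / (c - 1)⌋₊ < e) :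
    divisorWeight c e < divisorWeight c ⌊1 / (c - 1)⌋₊ :=
  Nat.rel_of_forall_rel_succ_of_le_of_lt (· > ·)
    (fun n hn => lt_of_not_ge fun h => by
      have := (divisorWeight_le_divisorWeight_succ_iff hc n).1 h
      omega)
    le_rfl he

theorem divisorWeight_le_floor (hc : 1 < c) (e : ℕ) :
    divisorWeight c e ≤ divisorWeight c ⌊1 / (c - 1)⌋₊ := by
  rcases le_or_gt e ⌊1 / (c - 1)⌋₊ with hea | hae
  · suffices ∀ n, e ≤ n → n ≤ ⌊1 / (c - 1)⌋₊ → divisorWeight c e ≤ divisorWeight c n from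
      this _ hea le_rfl
    intro n hen
    induction n, hen using Nat.le_induction with
    | base => exact fun _ => le_rfl
    | succ n _ ih =>
      exact fun hn => (ih (by omega)).trans ((divisorWeight_le_divisorWeight_succ_iff hc n).2 hn)
  · exact (divisorWeight_lt_floor_of_floor_lt hc hae).le

end DivisorWeight

section DivisorCount

open UniqueFactorizationMonoid

variable {K : Type} [Field K] [DecidableEq K]

theorem monic_of_mem_normalizedFactors {f p : K[X]} (hp : p ∈ normalizedFactors f) : p.Monic :=
  normalize_normalized_factor p hp ▸ monic_normalize (irreducible_of_normalized_factor p hp).ne_zero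

theorem mult_eq_count_normalizedFactors {p f : K[X]} (hp : p.Monic) (hirr : Irreducible p)
    (hf : f ≠ 0) : mult p f = (normalizedFactors f).count p := by
  have h := emultiplicity_eq_count_normalizedFactors hirr hf
  rw [hp.normalize_eq_self] at h
  exact multiplicity_eq_of_emultiplicity_eq_some h

theorem prod_normalizedFactors_of_monic {f : K[X]} (hf : f.Monic) :
    (normalizedFactors f).prod = f := by
  refine eq_of_monic_of_associated ?_ hf (prod_normalizedFactors hf.ne_zero)
  simpa using monic_multiset_prod_of_monic _ id fun p hp => monic_of_mem_normalizedFactors hp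

theorem normalizedFactors_prod_of_le {f : K[X]} {m : Multiset K[X]}
    (hm : m ≤ normalizedFactors f) : normalizedFactors m.prod = m := by
  have hmem : ∀ p ∈ m, p ∈ normalizedFactors f := fun p hp => Multiset.mem_of_le hm hp
  rw [normalizedFactors_prod_eq m fun p hp => irreducible_of_normalized_factor p (hmem p hp)]
  exact Multiset.map_congr rfl (fun p hp => normalize_normalized_factor p (hmem p hp)) |>.trans
    m.map_id

theorem tau_eq_prod_count {f : K[X]} (hf : f ≠ 0) {S : Finset K[X]}
    (hS : (normalizedFactors f).toFinset ⊆ S) :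
    tau f = ∏ p ∈ S, ((normalizedFactors f).count p + 1) := by
  have hdivisors : {d : K[X] | d.Monic ∧ d ∣ f} =
      Multiset.prod '' (Finset.Iic (normalizedFactors f) : Set (Multiset K[X])) := by
    ext d
    simp only [Set.mem_ofPred_eq, Set.mem_image, Finset.coe_Iic, Set.mem_Iic]
    constructor
    · rintro ⟨hd, hdf⟩
      exact ⟨normalizedFactors d,
        (dvd_iff_normalizedFactors_le_normalizedFactors hd.ne_zero hf).1 hdf,
        prod_normalizedFactors_of_monic hd⟩
    · rintro ⟨m, hm, rfl⟩
      refine ⟨?_, (Multiset.prod_dvd_prod_of_le hm).trans (prod_normalizedFactors hf).dvd⟩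
      simpa using monic_multiset_prod_of_monic _ id
        fun p hp => monic_of_mem_normalizedFactors (Multiset.mem_of_le hm hp)
  have hinj : Set.InjOn Multiset.prod (Finset.Iic (normalizedFactors f) : Set (Multiset K[X])) :=
    fun m hm m' hm' heq => by
      rw [← normalizedFactors_prod_of_le (Finset.mem_Iic.1 hm), heq,
        normalizedFactors_prod_of_le (Finset.mem_Iic.1 hm')]
  rw [tau, hdivisors, hinj.ncard_image, Set.ncard_coe_finset, Multiset.card_Iic]
  exact Finset.prod_subset hS fun p _ hp => by
    rw [Multiset.count_eq_zero_of_notMem (mt Multiset.mem_toFinset.2 hp), zero_add]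

theorem tau_pos {f : K[X]} (hf : f ≠ 0) : 0 < tau f := by
  rw [tau_eq_prod_count hf subset_rfl]
  exact Finset.prod_pos fun _ _ => Nat.succ_pos _

theorem natDegree_eq_sum_count {f : K[X]} (hf : f.Monic) {S : Finset K[X]}
    (hS : (normalizedFactors f).toFinset ⊆ S) :
    f.natDegree = ∑ p ∈ S, (normalizedFactors f).count p * p.natDegree := by
  have hmonic : ∀ p ∈ S, (p ^ (normalizedFactors f).count p).Monic := fun p _ => by
    by_cases hp : p ∈ normalizedFactors f
    · exact (monic_of_mem_normalizedFactors hp).pow _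
    · rw [Multiset.count_eq_zero_of_notMem hp, pow_zero]
      exact monic_one
  conv_lhs => rw [← prod_normalizedFactors_of_monic hf,
    Finset.prod_multiset_count_of_subset _ S hS]
  rw [natDegree_prod_of_monic S _ hmonic]
  simp only [natDegree_pow]

theorem tau_div_pow_natDegree_eq_prod (Q : ℝ) {f : K[X]} (hf : f.Monic)
    {S : Finset K[X]} (hS : (normalizedFactors f).toFinset ⊆ S) :
    (tau f : ℝ) / Q ^ f.natDegree =
      ∏ p ∈ S, divisorWeight (Q ^ p.natDegree) ((normalizedFactors f).count p) := by
  rw [tau_eq_prod_count hf.ne_zero hS, natDegree_eq_sum_count hf hS,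
    ← Finset.prod_pow_eq_pow_sum, Nat.cast_prod, ← Finset.prod_div_distrib]
  refine Finset.prod_congr rfl fun p _ => ?_
  rw [divisorWeight, ← pow_mul, mul_comm, Nat.cast_succ]

end DivisorCount

theorem lt_of_div_pow_le_div_pow {Q a b : ℝ} {m n : ℕ} (hQ : 1 < Q) (hb : 0 < b) (hmn : m ≤ n)
    (hle : a / Q ^ m ≤ b / Q ^ n) (hlt : a / Q ^ m < b / Q ^ n ∨ m < n) : a < b := by
  have hQm : 0 < Q ^ m := pow_pos (by linarith) m
  have hQn : 0 < Q ^ n := pow_pos (by linarith) n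
  have hpow : Q ^ m ≤ Q ^ n := pow_le_pow_right₀ hQ.le hmn
  rw [div_le_div_iff₀ hQm hQn] at hle
  rcases hlt with hlt | hlt
  · rw [div_lt_div_iff₀ hQm hQn] at hlt
    nlinarith
  · have := pow_lt_pow_right₀ hQ hlt
    nlinarith

section Comparison

open UniqueFactorizationMonoid

variable {K : Type} [Field K] [DecidableEq K] {Q : ℝ} {h : K[X]}

theorem monic_and_irreducible_of_mem_union {f g p : K[X]}
    (hp : p ∈ (normalizedFactors f).toFinset ∪ (normalizedFactors g).toFinset) :
    p.Monic ∧ Irreducible p := by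
  obtain hp | hp := Finset.mem_union.1 hp <;>
    exact ⟨monic_of_mem_normalizedFactors (Multiset.mem_toFinset.1 hp),
      irreducible_of_normalized_factor _ (Multiset.mem_toFinset.1 hp)⟩

variable (hQ : 1 < Q) (hh : h.Monic)
  (hmult : ∀ p : K[X], p.Monic → Irreducible p → mult p h = ⌊1 / (Q ^ p.natDegree - 1)⌋₊)
include hQ hh hmult

theorem divisorWeight_le_count {p : K[X]} (hp : p.Monic) (hirr : Irreducible p) (e : ℕ) :
    divisorWeight (Q ^ p.natDegree) e ≤
      divisorWeight (Q ^ p.natDegree) ((normalizedFactors h).count p) := by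
  rw [← mult_eq_count_normalizedFactors hp hirr hh.ne_zero, hmult p hp hirr]
  exact divisorWeight_le_floor (one_lt_pow₀ hQ hirr.natDegree_pos.ne') e

theorem divisorWeight_lt_count {p : K[X]} (hp : p.Monic) (hirr : Irreducible p) {e : ℕ}
    (he : (normalizedFactors h).count p < e) :
    divisorWeight (Q ^ p.natDegree) e <
      divisorWeight (Q ^ p.natDegree) ((normalizedFactors h).count p) := by
  rw [← mult_eq_count_normalizedFactors hp hirr hh.ne_zero, hmult p hp hirr] at he ⊢
  exact divisorWeight_lt_floor_of_floor_lt (one_lt_pow₀ hQ hirr.natDegree_pos.ne') he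

theorem tau_div_pow_natDegree_le {g : K[X]} (hg : g.Monic) :
    (tau g : ℝ) / Q ^ g.natDegree ≤ tau h / Q ^ h.natDegree := by
  let S := (normalizedFactors g).toFinset ∪ (normalizedFactors h).toFinset
  rw [tau_div_pow_natDegree_eq_prod Q hg (S := S) Finset.subset_union_left,
    tau_div_pow_natDegree_eq_prod Q hh (S := S) Finset.subset_union_right]
  refine Finset.prod_le_prod (fun p _ => (divisorWeight_pos (by positivity) _).le) fun p hp => ?_
  obtain ⟨hpm, hirr⟩ := monic_and_irreducible_of_mem_union hp
  exact divisorWeight_le_count hQ hh hmult hpm hirr _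

theorem tau_div_pow_natDegree_lt_of_not_dvd {g : K[X]} (hg : g.Monic) (hgh : ¬g ∣ h) :
    (tau g : ℝ) / Q ^ g.natDegree < tau h / Q ^ h.natDegree := by
  obtain ⟨p, hp⟩ : ∃ p, (normalizedFactors h).count p < (normalizedFactors g).count p := by
    rw [dvd_iff_normalizedFactors_le_normalizedFactors hg.ne_zero hh.ne_zero,
      Multiset.le_iff_count] at hgh
    simpa only [not_forall, not_le] using hgh
  have hpg : p ∈ normalizedFactors g := Multiset.count_pos.1 (by omega)
  let S := (normalizedFactors g).toFinset ∪ (normalizedFactors h).toFinset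
  rw [tau_div_pow_natDegree_eq_prod Q hg (S := S) Finset.subset_union_left,
    tau_div_pow_natDegree_eq_prod Q hh (S := S) Finset.subset_union_right]
  refine Finset.prod_lt_prod (fun p _ => divisorWeight_pos (by positivity) _) (fun p hp => ?_)
    ⟨p, Finset.mem_union_left _ (Multiset.mem_toFinset.2 hpg),
      divisorWeight_lt_count hQ hh hmult (monic_of_mem_normalizedFactors hpg)
        (irreducible_of_normalized_factor p hpg) hp⟩
  obtain ⟨hpm, hirr⟩ := monic_and_irreducible_of_mem_union hp
  exact divisorWeight_le_count hQ hh hmult hpm hirr _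

end Comparison

/-- `ĥ(x)` is the unique highly composite polynomial of its degree. -/
theorem hhat_unique_highly_composite {Fq : Type} [Field Fq] [Fintype Fq]
    (x : ℝ) (hx : 0 < x) (h : Fq[X]) (hh : IsHhat x h) :
    ∀ g : Fq[X], g.Monic → g.natDegree ≤ h.natDegree → g ≠ h → tau g < tau h := by
  classical
  obtain ⟨hh, hmult⟩ := hh
  intro g hg hdeg hne
  set Q : ℝ := (Fintype.card Fq : ℝ) ^ x⁻¹
  have hQ : 1 < Q := Real.one_lt_rpow (by exact_mod_cast Fintype.one_lt_card) (inv_pos.2 hx)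
  have hmultQ : ∀ p : Fq[X], p.Monic → Irreducible p →
      mult p h = ⌊1 / (Q ^ p.natDegree - 1)⌋₊ := by
    intro p hp hirr
    rw [hmult p hp hirr, div_eq_inv_mul (p.natDegree : ℝ) x,
      Real.rpow_mul_natCast (Nat.cast_nonneg _)]
  have hτ : (0 : ℝ) < tau h := Nat.cast_pos.2 (tau_pos hh.ne_zero)
  suffices (tau g : ℝ) / Q ^ g.natDegree < tau h / Q ^ h.natDegree ∨
      g.natDegree < h.natDegree from
    Nat.cast_lt.1 (lt_of_div_pow_le_div_pow hQ hτ hdeg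
      (tau_div_pow_natDegree_le hQ hh hmultQ hg) this)
  by_cases hgh : g ∣ h
  · exact Or.inr <| hdeg.lt_of_ne fun hd =>
      hne (eq_of_monic_of_dvd_of_natDegree_le hg hh hgh hd.ge).symm
  · exact Or.inl (tau_div_pow_natDegree_lt_of_not_dvd hQ hh hmultQ hg hgh)
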